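/- arXiv:2210.15064 — 3 statements merged into one kernel-verified Lean document; each statement's English description precedes it below -/
import Mathlib

section
/- Let Θ and G be finite-dimensional real inner product spaces, let K be a positive integer, let C ⊆ Θ be a nonempty closed convex set, let L_1,…,L_K : Θ → G be continuous linear maps not all zero, let y_1,…,y_K ∈ G, let ω_1,…,ω_K ∈ (0,1] with ω_1+⋯+ω_K = 1, and let R : G → G be firmly nonexpansive. Suppose the variational inequality problem — find θ ∈ C such that for all ϑ ∈ C, ⟨ϑ − θ, Σ_{k=1}^K ω_k L_k*(R(L_k θ) − y_k)⟩ ≥ 0 — has at least one solution. Let γ ∈ (0, 2/max_{1≤k≤K}‖L_k‖²), let θ_0 ∈ Θ and ϑ_{1,0},…,ϑ_{K,0} ∈ Θ, and for each n ∈ ℕ let 𝕂_n be a nonempty subset of {1,…,K}. Define iteratively: for k ∈ 𝕂_n, ϑ_{k,n+1} = θ_n − γ L_k*(R(L_k θ_n) − y_k); for k ∉ 𝕂_n, ϑ_{k,n+1} = ϑ_{k,n}; and θ_{n+1} = P_C(Σ_{k=1}^K ω_k ϑ_{k,n+1}), where P_C denotes the metric projection onto C. If there exists P ∈ ℕ such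 that for every n ∈ ℕ, 𝕂_n ∪ 𝕂_{n+1} ∪ ⋯ ∪ 𝕂_{n+P−1} = {1,…,K}, then the sequence (θ_n)_{n∈ℕ} converges to a solution of the variational inequality problem. -/
/-!
Write `T k x = x - γ L_k* (R (L_k x) - y_k)`. Since `R` is firmly nonexpansive and
`γ ‖L_k‖² < 2`, every `T k` is averaged, and the solutions of the variational inequality are the
fixed points of `P ∘ ∑ ω_k T_k`; the algorithm is a block-iterative fixed-point iteration for this
map. For a fixed point `p`, `max_k ‖ϑ_{k,n} - T_k p‖` is nonincreasing, with limit `μ`. The sweep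
condition provides times `g` with `‖θ_g - p‖ ≥ μ` at which every `ϑ_{k,g}` was computed from a
recent iterate. Along a convergent subsequence the limits attain equality both in Jensen's
inequality for `‖·‖²` and in the averagedness inequalities, so they all coincide with a point `q`
satisfying `T_k q - T_k p = q - p`, and firm nonexpansiveness of `P` makes `q` a fixed point.
The Lyapunov quantity for `q` then vanishes along the subsequence, hence along the whole sequence.
-/

open scoped RealInnerProductSpace
open Filter Topology

section General

variable {E : Type*} [NormedAddCommGroup E]

/-- For `ε = (1 - α) / α` this says that `T` is `α`-averaged. -/
def IsAveragedWith (ε : ℝ) (T : E → E) : Prop :=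
  ∀ x z, ‖T x - T z‖ ^ 2 + ε * ‖(x - T x) - (z - T z)‖ ^ 2 ≤ ‖x - z‖ ^ 2

theorem IsAveragedWith.lipschitzWith {ε : ℝ} {T : E → E} (hT : IsAveragedWith ε T)
    (hε : 0 ≤ ε) : LipschitzWith 1 T :=
  LipschitzWith.of_dist_le_mul fun x z => by
    rw [NNReal.coe_one, one_mul, dist_eq_norm, dist_eq_norm,
      ← sq_le_sq₀ (norm_nonneg _) (norm_nonneg _)]
    nlinarith [hT x z, sq_nonneg ‖(x - T x) - (z - T z)‖]

variable [InnerProductSpace ℝ E]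

def IsFirmlyNonexpansive (R : E → E) : Prop :=
  ∀ x y, ‖R x - R y‖ ^ 2 ≤ ⟪x - y, R x - R y⟫

def IsMetricProjection (C : Set E) (P : E → E) : Prop :=
  ∀ x, P x ∈ C ∧ ∀ c ∈ C, ‖x - P x‖ ≤ ‖x - c‖

theorem norm_le_of_norm_sq_le_inner {u v : E} (h : ‖u‖ ^ 2 ≤ ⟪v, u⟫) : ‖u‖ ≤ ‖v‖ := by
  have := real_inner_le_norm v u
  nlinarith [norm_nonneg u, norm_nonneg v]

theorem eq_of_norm_le_of_norm_sq_le_inner {u v : E} (hvu : ‖v‖ ≤ ‖u‖)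
    (h : ‖u‖ ^ 2 ≤ ⟪v, u⟫) : u = v := by
  have hsq : ‖u - v‖ ^ 2 ≤ 0 := by
    rw [norm_sub_sq_real, real_inner_comm]
    nlinarith [norm_nonneg u, norm_nonneg v]
  exact sub_eq_zero.1 (norm_eq_zero.1 (by nlinarith [norm_nonneg (u - v)]))

theorem IsFirmlyNonexpansive.lipschitzWith {R : E → E} (hR : IsFirmlyNonexpansive R) :
    LipschitzWith 1 R :=
  LipschitzWith.of_dist_le_mul fun x y => by
    simpa [dist_eq_norm] using norm_le_of_norm_sq_le_inner (hR x y)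

theorem strictConvexOn_norm_sq : StrictConvexOn ℝ Set.univ fun x : E => ‖x‖ ^ 2 := by
  refine StrongConvexOn.strictConvexOn (m := 2) ?_ two_pos
  rw [strongConvexOn_iff_convex]
  simpa using convexOn_const (0 : ℝ) convex_univ

theorem eq_sum_smul_of_norm_le_norm_sum_smul {ι : Type*} [Fintype ι] {ω : ι → ℝ}
    (hω : ∀ k, 0 < ω k) (hω1 : ∑ k, ω k = 1) {b : ι → E}
    (hb : ∀ k, ‖b k‖ ≤ ‖∑ j, ω j • b j‖) (k : ι) : b k = ∑ j, ω j • b j := by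
  have hjensen : ∑ j, ω j • ‖b j‖ ^ 2 ≤ ‖∑ j, ω j • b j‖ ^ 2 :=
    calc ∑ j, ω j • ‖b j‖ ^ 2 ≤ ∑ j, ω j • ‖∑ j, ω j • b j‖ ^ 2 :=
          Finset.sum_le_sum fun j _ =>
            smul_le_smul_of_nonneg_left (pow_le_pow_left₀ (norm_nonneg _) (hb j) 2) (hω j).le
      _ = ‖∑ j, ω j • b j‖ ^ 2 := by rw [← Finset.sum_smul, hω1, one_smul]
  have hall := strictConvexOn_norm_sq.eq_of_le_map_sum (fun j _ => hω j) hω1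
    (fun j _ => Set.mem_univ (b j)) hjensen
  calc b k = ∑ j, ω j • b k := by rw [← Finset.sum_smul, hω1, one_smul]
    _ = ∑ j, ω j • b j := Finset.sum_congr rfl fun j _ => by
        rw [hall (Finset.mem_univ k) (Finset.mem_univ j)]

theorem norm_sum_smul_le_norm {ι : Type*} [Fintype ι] {ω : ι → ℝ} (hω : ∀ k, 0 ≤ ω k)
    (hω1 : ∑ k, ω k = 1) (u : ι → E) : ‖∑ k, ω k • u k‖ ≤ ‖u‖ :=
  calc ‖∑ k, ω k • u k‖ ≤ ∑ k, ω k * ‖u‖ :=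
        (norm_sum_le _ _).trans <| Finset.sum_le_sum fun k _ => by
          rw [norm_smul, Real.norm_of_nonneg (hω k)]
          exact mul_le_mul_of_nonneg_left (norm_le_pi_norm u k) (hω k)
    _ = ‖u‖ := by rw [← Finset.sum_mul, hω1, one_mul]

namespace IsMetricProjection

variable {C : Set E} {P : E → E}

theorem inner_le_zero (hP : IsMetricProjection C P) (hC : Convex ℝ C) (x : E) {c : E}
    (hc : c ∈ C) : ⟪x - P x, c - P x⟫ ≤ 0 := by
  have : Nonempty C := ⟨⟨P x, (hP x).1⟩⟩
  refine (norm_eq_iInf_iff_real_inner_le_zero hC (hP x).1).1 ?_ c hc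
  refine le_antisymm (le_ciInf fun c => (hP x).2 c c.2) ?_
  exact ciInf_le ⟨0, by rintro _ ⟨c, rfl⟩; positivity⟩ (⟨P x, (hP x).1⟩ : C)

theorem eq_of_inner_le_zero (hP : IsMetricProjection C P) {x p : E} (hp : p ∈ C)
    (h : ∀ c ∈ C, ⟪x - p, c - p⟫ ≤ 0) : P x = p := by
  have hPx := h (P x) (hP x).1
  have hsplit : x - P x = (x - p) - (P x - p) := by abel
  have hle := (hP x).2 p hp
  have hsq : ‖x - P x‖ ^ 2 ≤ ‖x - p‖ ^ 2 := pow_le_pow_left₀ (norm_nonneg _) hle 2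
  rw [hsplit, norm_sub_sq_real] at hsq
  exact sub_eq_zero.1 (norm_eq_zero.1 (by nlinarith [norm_nonneg (P x - p)]))

theorem isFirmlyNonexpansive (hP : IsMetricProjection C P) (hC : Convex ℝ C) :
    IsFirmlyNonexpansive P := fun x z => by
  have hx := hP.inner_le_zero hC x (hP z).1
  have hz := hP.inner_le_zero hC z (hP x).1
  rw [← neg_sub (P x) (P z), inner_neg_right] at hx
  have hsplit : ⟪x - z, P x - P z⟫
      = ⟪P x - P z, P x - P z⟫ + ⟪x - P x, P x - P z⟫ - ⟪z - P z, P x - P z⟫ := by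
    rw [← inner_add_left, ← inner_sub_left]
    congr 1; abel
  rw [hsplit, real_inner_self_eq_norm_sq]
  linarith

theorem eq_iff_variationalInequality (hP : IsMetricProjection C P) (hC : Convex ℝ C)
    {γ : ℝ} (hγ : 0 < γ) (θ a : E) :
    P (θ - γ • a) = θ ↔ θ ∈ C ∧ ∀ ϑ ∈ C, 0 ≤ ⟪ϑ - θ, a⟫ := by
  have hinner : ∀ ϑ, ⟪θ - γ • a - θ, ϑ - θ⟫ = -(γ * ⟪ϑ - θ, a⟫) := fun ϑ => by
    rw [sub_sub_cancel_left, inner_neg_left, real_inner_smul_left, real_inner_comm]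
  constructor
  · intro hfix
    refine ⟨hfix ▸ (hP _).1, fun ϑ hϑ => ?_⟩
    have h := hP.inner_le_zero hC (θ - γ • a) hϑ
    rw [hfix, hinner] at h
    exact nonneg_of_mul_nonneg_right (by linarith) hγ
  · rintro ⟨hθ, hvi⟩
    refine hP.eq_of_inner_le_zero hθ fun ϑ hϑ => ?_
    rw [hinner]
    nlinarith [hvi ϑ hϑ]

end IsMetricProjection

theorem eq_of_isAveragedWith_of_le_norm_sum {ι : Type*} [Fintype ι] {T : ι → E → E} {ε : ℝ}
    (hT : ∀ k, IsAveragedWith ε (T k)) (hε : 0 < ε) {ω : ι → ℝ} (hω : ∀ k, 0 < ω k)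
    (hω1 : ∑ k, ω k = 1) {a : ι → E} {p : E} {μ : ℝ} (ha : ∀ k, ‖a k - p‖ ≤ μ)
    (hμ : μ ≤ ‖∑ k, ω k • (T k (a k) - T k p)‖) (k : ι) :
    a k - p = ∑ j, ω j • (T j (a j) - T j p) ∧ T k (a k) - T k p = a k - p := by
  have hb := eq_sum_smul_of_norm_le_norm_sum_smul hω hω1 (b := fun j => T j (a j) - T j p)
    (fun j => by
      refine le_trans ?_ ((ha j).trans hμ)
      simpa using ((hT j).lipschitzWith hε.le).norm_sub_le (a j) p) k
  have hnorm : ‖a k - p‖ ≤ ‖T k (a k) - T k p‖ := (ha k).trans (hμ.trans_eq (by rw [← hb]))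
  have hres : (a k - T k (a k)) - (p - T k p) = 0 := by
    have hsq := hT k (a k) p
    have h0 : ‖(a k - T k (a k)) - (p - T k p)‖ ^ 2 ≤ 0 := by
      nlinarith [pow_le_pow_left₀ (norm_nonneg _) hnorm 2, sq_nonneg ‖a k - p‖]
    exact norm_eq_zero.1 (by nlinarith [norm_nonneg ((a k - T k (a k)) - (p - T k p))])
  have hak : T k (a k) - T k p = a k - p := by
    rw [← sub_eq_zero, ← neg_eq_zero, ← hres]; abel
  exact ⟨hak ▸ hb, hak⟩

theorem exists_fixedPoint_of_le_norm {ι : Type*} [Fintype ι] {T : ι → E → E} {P : E → E}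
    (hP : IsFirmlyNonexpansive P) {ε : ℝ} (hT : ∀ k, IsAveragedWith ε (T k)) (hε : 0 < ε)
    {ω : ι → ℝ} (hω : ∀ k, 0 < ω k) (hω1 : ∑ k, ω k = 1) {p : E}
    (hp : P (∑ k, ω k • T k p) = p) {a : ι → E} {μ : ℝ} (ha : ∀ k, ‖a k - p‖ ≤ μ)
    (hμ : μ ≤ ‖∑ k, ω k • (T k (a k) - T k p)‖) (hPa : μ ≤ ‖P (∑ k, ω k • T k (a k)) - p‖) :
    ∃ q, (∀ k, a k = q) ∧ P (∑ k, ω k • T k q) = q := by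
  set q := (∑ j, ω j • (T j (a j) - T j p)) + p
  have haq : ∀ k, a k = q := fun k =>
    eq_add_of_sub_eq (eq_of_isAveragedWith_of_le_norm_sum hT hε hω hω1 ha hμ k).1
  have hTq : ∀ k, T k q - T k p = q - p := fun k => by
    simpa [haq k] using (eq_of_isAveragedWith_of_le_norm_sum hT hε hω hω1 ha hμ k).2
  have hshift : ∑ k, ω k • T k q - ∑ k, ω k • T k p = q - p := by
    rw [← Finset.sum_sub_distrib]
    simp only [← smul_sub, hTq, ← Finset.sum_smul, hω1, one_smul]
  obtain ⟨k₀, -⟩ := Finset.nonempty_of_sum_ne_zero (hω1.trans_ne one_ne_zero)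
  simp only [haq] at ha hPa
  refine ⟨q, haq, sub_left_injective (eq_of_norm_le_of_norm_sq_le_inner ((ha k₀).trans hPa) ?_)⟩
  simpa [hp, hshift] using hP (∑ k, ω k • T k q) (∑ k, ω k • T k p)

end General

section ForwardStep

variable {E F : Type*} [NormedAddCommGroup E] [InnerProductSpace ℝ E] [CompleteSpace E]
  [NormedAddCommGroup F] [InnerProductSpace ℝ F] [CompleteSpace F]

noncomputable def forwardStep (L : E →L[ℝ] F) (R : F → F) (y : F) (γ : ℝ) (x : E) : E :=
  x - γ • ContinuousLinearMap.adjoint L (R (L x) - y)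

theorem isAveragedWith_forwardStep (L : E →L[ℝ] F) {R : F → F} (hR : IsFirmlyNonexpansive R)
    (y : F) {γ β : ℝ} (hγ : 0 < γ) (hβ : 0 < β) (hL : ‖L‖ ^ 2 ≤ β) :
    IsAveragedWith (2 / (γ * β) - 1) (forwardStep L R y γ) := fun x z => by
  set d := R (L x) - R (L z)
  set b := ContinuousLinearMap.adjoint L d
  have hstep : (x - forwardStep L R y γ x) - (z - forwardStep L R y γ z) = γ • b := by
    simp only [forwardStep, b, d, sub_sub_cancel, ← smul_sub, ← map_sub, sub_sub_sub_cancel_right]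
  have hdiff : forwardStep L R y γ x - forwardStep L R y γ z = (x - z) - γ • b := by
    rw [← hstep]; abel
  have hinner : ‖d‖ ^ 2 ≤ ⟪x - z, b⟫ := by
    rw [ContinuousLinearMap.adjoint_inner_right, map_sub]
    exact hR _ _
  have hb : ‖b‖ ^ 2 ≤ β * ‖d‖ ^ 2 := by
    have hop : ‖b‖ ≤ ‖L‖ * ‖d‖ := by
      simpa only [LinearIsometryEquiv.norm_map] using
        (ContinuousLinearMap.adjoint L).le_opNorm d
    calc ‖b‖ ^ 2 ≤ (‖L‖ * ‖d‖) ^ 2 := pow_le_pow_left₀ (norm_nonneg _) hop 2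
      _ = ‖L‖ ^ 2 * ‖d‖ ^ 2 := mul_pow _ _ _
      _ ≤ β * ‖d‖ ^ 2 := mul_le_mul_of_nonneg_right hL (sq_nonneg _)
  have hcoef : (2 / (γ * β) - 1) * γ ^ 2 + γ ^ 2 = 2 * γ / β := by
    field_simp; ring
  have hgain : 2 * γ / β * ‖b‖ ^ 2 ≤ 2 * γ * ‖d‖ ^ 2 := by
    rw [div_mul_eq_mul_div, div_le_iff₀ hβ]; nlinarith
  rw [hdiff, hstep, norm_sub_sq_real, norm_smul, real_inner_smul_right, Real.norm_of_nonneg hγ.le]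
  nlinarith

end ForwardStep

section BlockIteration

variable {E ι : Type*} [NormedAddCommGroup E] [InnerProductSpace ℝ E] [Fintype ι]

structure IsBlockIteration (T : ι → E → E) (P : E → E) (ω : ι → ℝ) (𝕂 : ℕ → Finset ι)
    (x : ℕ → E) (w : ℕ → ι → E) : Prop where
  eq_proj : ∀ n, x n = P (∑ k, ω k • w n k)
  update : ∀ n, ∀ k ∈ 𝕂 n, w (n + 1) k = T k (x n)
  keep : ∀ n, ∀ k ∉ 𝕂 n, w (n + 1) k = w n k

namespace IsBlockIteration

variable {T : ι → E → E} {P : E → E} {ω : ι → ℝ} {𝕂 : ℕ → Finset ι} {x : ℕ → E}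
  {w : ℕ → ι → E} {p : E}

theorem norm_sub_le_norm_sum (hit : IsBlockIteration T P ω 𝕂 x w) (hP : LipschitzWith 1 P)
    (hp : P (∑ k, ω k • T k p) = p) (n : ℕ) :
    ‖x n - p‖ ≤ ‖∑ k, ω k • (w n k - T k p)‖ :=
  calc ‖x n - p‖ = ‖P (∑ k, ω k • w n k) - P (∑ k, ω k • T k p)‖ := by rw [hit.eq_proj, hp]
    _ ≤ ‖∑ k, ω k • w n k - ∑ k, ω k • T k p‖ := by simpa using hP.norm_sub_le _ _
    _ = ‖∑ k, ω k • (w n k - T k p)‖ := by simp only [smul_sub, Finset.sum_sub_distrib]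

theorem norm_sub_le_norm_pi (hit : IsBlockIteration T P ω 𝕂 x w) (hP : LipschitzWith 1 P)
    (hω : ∀ k, 0 ≤ ω k) (hω1 : ∑ k, ω k = 1) (hp : P (∑ k, ω k • T k p) = p) (n : ℕ) :
    ‖x n - p‖ ≤ ‖w n - fun k => T k p‖ :=
  (hit.norm_sub_le_norm_sum hP hp n).trans (norm_sum_smul_le_norm hω hω1 _)

theorem antitone_norm_pi (hit : IsBlockIteration T P ω 𝕂 x w) (hP : LipschitzWith 1 P)
    (hT : ∀ k, LipschitzWith 1 (T k)) (hω : ∀ k, 0 ≤ ω k) (hω1 : ∑ k, ω k = 1)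
    (hp : P (∑ k, ω k • T k p) = p) : Antitone fun n => ‖w n - fun k => T k p‖ := by
  refine antitone_nat_of_succ_le fun n => (pi_norm_le_iff_of_nonneg (norm_nonneg _)).2 fun k => ?_
  by_cases hk : k ∈ 𝕂 n
  · rw [Pi.sub_apply, hit.update n k hk]
    calc ‖T k (x n) - T k p‖ ≤ ‖x n - p‖ := by
          simpa using (hT k).norm_sub_le (x n) p
      _ ≤ _ := hit.norm_sub_le_norm_pi hP hω hω1 hp n
  · rw [Pi.sub_apply, hit.keep n k hk]
    exact norm_le_pi_norm (w n - fun k => T k p) k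

theorem exists_last_update (hit : IsBlockIteration T P ω 𝕂 x w) {k : ι} {n j : ℕ}
    (hk : k ∈ 𝕂 j) (hnj : n ≤ j) {m : ℕ} (hjm : j < m) :
    ∃ ℓ, n ≤ ℓ ∧ ℓ < m ∧ w m k = T k (x ℓ) := by
  induction m with
  | zero => omega
  | succ m ih =>
    by_cases hkm : k ∈ 𝕂 m
    · exact ⟨m, by omega, by omega, hit.update m k hkm⟩
    · have hjm' : j < m := lt_of_le_of_ne (Nat.lt_succ_iff.1 hjm) fun h => hkm (h ▸ hk)
      obtain ⟨ℓ, hnℓ, hℓm, hw⟩ := ih hjm'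
      exact ⟨ℓ, hnℓ, by omega, by rw [hit.keep m k hkm, hw]⟩

theorem exists_norm_pi_le_norm_sub [Nonempty ι] (hit : IsBlockIteration T P ω 𝕂 x w)
    (hT : ∀ k, LipschitzWith 1 (T k)) {Q : ℕ} (hsweep : ∀ n k, ∃ j, n ≤ j ∧ j < n + Q ∧ k ∈ 𝕂 j)
    (n : ℕ) : ∃ ℓ, n ≤ ℓ ∧ ℓ < n + Q ∧ ‖w (n + Q) - fun k => T k p‖ ≤ ‖x ℓ - p‖ := by
  choose j hnj hjQ hj using hsweep n
  choose ℓ hnℓ hℓQ hw using fun k => hit.exists_last_update (hj k) (hnj k) (hjQ k)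
  obtain ⟨k₀, -, hmax⟩ :=
    Finset.exists_max_image Finset.univ (fun k => ‖x (ℓ k) - p‖) Finset.univ_nonempty
  refine ⟨ℓ k₀, hnℓ k₀, hℓQ k₀, (pi_norm_le_iff_of_nonneg (norm_nonneg _)).2 fun k => ?_⟩
  rw [Pi.sub_apply, hw k]
  calc ‖T k (x (ℓ k)) - T k p‖ ≤ ‖x (ℓ k) - p‖ := by
        simpa using (hT k).norm_sub_le (x (ℓ k)) p
    _ ≤ ‖x (ℓ k₀) - p‖ := hmax k (Finset.mem_univ k)

theorem exists_le_norm_sub_with_late_updates [Nonempty ι] (hit : IsBlockIteration T P ω 𝕂 x w)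
    (hT : ∀ k, LipschitzWith 1 (T k)) {Q : ℕ} (hsweep : ∀ n k, ∃ j, n ≤ j ∧ j < n + Q ∧ k ∈ 𝕂 j)
    {μ : ℝ} (hμ : ∀ m, μ ≤ ‖w m - fun k => T k p‖) (n : ℕ) :
    ∃ g, n ≤ g ∧ μ ≤ ‖x g - p‖ ∧ ∀ k, ∃ u, n ≤ u ∧ w g k = T k (x u) := by
  obtain ⟨g, hng, hgQ, hg⟩ := hit.exists_norm_pi_le_norm_sub hT hsweep (n + Q)
  refine ⟨g, by omega, (hμ _).trans hg, fun k => ?_⟩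
  obtain ⟨j, hj₁, hj₂, hj⟩ := hsweep (g - Q) k
  obtain ⟨u, hnu, -, hu⟩ := hit.exists_last_update hj (n := n) (by omega) (m := g) (by omega)
  exact ⟨u, hnu, hu⟩

theorem exists_fixedPoint_tendsto_comp [FiniteDimensional ℝ E] [Nonempty ι]
    (hit : IsBlockIteration T P ω 𝕂 x w) (hP : IsFirmlyNonexpansive P) {ε : ℝ}
    (hT : ∀ k, IsAveragedWith ε (T k)) (hε : 0 < ε) (hω : ∀ k, 0 < ω k) (hω1 : ∑ k, ω k = 1)
    {Q : ℕ} (hsweep : ∀ n k, ∃ j, n ≤ j ∧ j < n + Q ∧ k ∈ 𝕂 j)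
    (hp : P (∑ k, ω k • T k p) = p) :
    ∃ q, P (∑ k, ω k • T k q) = q ∧
      ∃ ψ : ℕ → ℕ, Tendsto ψ atTop atTop ∧ Tendsto (w ∘ ψ) atTop (𝓝 fun k => T k q) := by
  have hPL := hP.lipschitzWith
  have hTL := fun k => (hT k).lipschitzWith hε.le
  have hω0 := fun k => (hω k).le
  set M := fun n => ‖w n - fun k => T k p‖
  have hanti : Antitone M := hit.antitone_norm_pi hPL hTL hω0 hω1 hp
  obtain ⟨μ, hMμ⟩ : ∃ μ, Tendsto M atTop (𝓝 μ) :=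
    ⟨_, tendsto_atTop_ciInf hanti ⟨0, by rintro _ ⟨n, rfl⟩; exact norm_nonneg _⟩⟩
  have hxM : ∀ {n m}, n ≤ m → ‖x m - p‖ ≤ M n := fun h =>
    (hit.norm_sub_le_norm_pi hPL hω0 hω1 hp _).trans (hanti h)
  choose g hng hg u hnu hwu using
    hit.exists_le_norm_sub_with_late_updates hTL hsweep (hanti.le_of_tendsto hMμ)
  obtain ⟨⟨a₀, a⟩, -, φ, hφ, hlim⟩ := tendsto_subseq_of_bounded
    (x := fun n => (x (g n), fun k => x (u n k)))
    (Metric.isBounded_closedBall (x := (p, fun _ => p)) (r := M 0)) fun n => by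
      rw [Metric.mem_closedBall, Prod.dist_eq, max_le_iff, dist_pi_le_iff (norm_nonneg _)]
      exact ⟨(dist_eq_norm _ _).trans_le (hxM (Nat.zero_le _)),
        fun k => (dist_eq_norm _ _).trans_le (hxM (Nat.zero_le _))⟩
  have hφ' : Tendsto φ atTop atTop := hφ.tendsto_atTop
  have hxg : Tendsto (fun n => x (g (φ n))) atTop (𝓝 a₀) := (continuous_fst.tendsto _).comp hlim
  have hxu : ∀ k, Tendsto (fun n => x (u (φ n) k)) atTop (𝓝 (a k)) :=
    tendsto_pi_nhds.1 ((continuous_snd.tendsto _).comp hlim)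
  have hwg : ∀ k, Tendsto (fun n => w (g (φ n)) k) atTop (𝓝 (T k (a k))) := fun k => by
    simpa only [hwu, Function.comp_def] using ((hTL k).continuous.tendsto _).comp (hxu k)
  have ha : ∀ k, ‖a k - p‖ ≤ μ := fun k =>
    le_of_tendsto_of_tendsto' ((hxu k).sub_const p).norm (hMμ.comp hφ') fun n => hxM (hnu _ k)
  have hsum : μ ≤ ‖∑ k, ω k • (T k (a k) - T k p)‖ :=
    ge_of_tendsto ((tendsto_finsetSum _ fun k _ => ((hwg k).sub_const _).const_smul (ω k)).norm)
      (Eventually.of_forall fun n => (hg _).trans (hit.norm_sub_le_norm_sum hPL hp _))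
  have ha₀ : a₀ = P (∑ k, ω k • T k (a k)) := tendsto_nhds_unique hxg <| by
    simpa only [← hit.eq_proj, Function.comp_def] using (hPL.continuous.tendsto _).comp
      (tendsto_finsetSum Finset.univ fun k _ => (hwg k).const_smul (ω k))
  have hPa : μ ≤ ‖P (∑ k, ω k • T k (a k)) - p‖ :=
    ha₀ ▸ ge_of_tendsto (hxg.sub_const p).norm (Eventually.of_forall fun n => hg _)
  obtain ⟨q, haq, hq⟩ := exists_fixedPoint_of_le_norm hP hT hε hω hω1 hp ha hsum hPa
  refine ⟨q, hq, g ∘ φ, tendsto_atTop_mono (fun n => hng (φ n)) hφ', tendsto_pi_nhds.2 fun k => ?_⟩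
  simpa only [haq, Function.comp_apply] using hwg k

theorem tendsto_of_tendsto_comp (hit : IsBlockIteration T P ω 𝕂 x w) (hP : LipschitzWith 1 P)
    (hT : ∀ k, LipschitzWith 1 (T k)) (hω : ∀ k, 0 ≤ ω k) (hω1 : ∑ k, ω k = 1) {q : E}
    (hq : P (∑ k, ω k • T k q) = q) {ψ : ℕ → ℕ} (hψ : Tendsto ψ atTop atTop)
    (hwψ : Tendsto (w ∘ ψ) atTop (𝓝 fun k => T k q)) : Tendsto x atTop (𝓝 q) := by
  have hw : Tendsto w atTop (𝓝 fun k => T k q) :=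
    tendsto_iff_norm_sub_tendsto_zero.2 <|
      (tendsto_iff_tendsto_subseq_of_antitone (hit.antitone_norm_pi hP hT hω hω1 hq) hψ).2
        (tendsto_iff_norm_sub_tendsto_zero.1 hwψ)
  have hcont : Continuous fun f : ι → E => P (∑ k, ω k • f k) :=
    hP.continuous.comp (continuous_finsetSum _ fun k _ => (continuous_apply k).const_smul (ω k))
  simpa only [hq, ← hit.eq_proj, Function.comp_def] using (hcont.tendsto _).comp hw

theorem tendsto_fixedPoint [FiniteDimensional ℝ E] [Nonempty ι]
    (hit : IsBlockIteration T P ω 𝕂 x w) (hP : IsFirmlyNonexpansive P) {ε : ℝ}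
    (hT : ∀ k, IsAveragedWith ε (T k)) (hε : 0 < ε) (hω : ∀ k, 0 < ω k) (hω1 : ∑ k, ω k = 1)
    {Q : ℕ} (hsweep : ∀ n k, ∃ j, n ≤ j ∧ j < n + Q ∧ k ∈ 𝕂 j)
    (hfix : ∃ p, P (∑ k, ω k • T k p) = p) :
    ∃ q, P (∑ k, ω k • T k q) = q ∧ Tendsto x atTop (𝓝 q) := by
  obtain ⟨p, hp⟩ := hfix
  obtain ⟨q, hq, ψ, hψ, hwψ⟩ := hit.exists_fixedPoint_tendsto_comp hP hT hε hω hω1 hsweep hp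
  exact ⟨q, hq, hit.tendsto_of_tendsto_comp hP.lipschitzWith (fun k => (hT k).lipschitzWith hε.le)
    (fun k => (hω k).le) hω1 hq hψ hwψ⟩

end IsBlockIteration

end BlockIteration

theorem block_iterative_forward_backward_converges_general
    {Θ G : Type*} [NormedAddCommGroup Θ] [InnerProductSpace ℝ Θ] [FiniteDimensional ℝ Θ]
    [NormedAddCommGroup G] [InnerProductSpace ℝ G] [FiniteDimensional ℝ G]
    (K : ℕ) (hK : 0 < K)
    {C : Set Θ} (hCcv : Convex ℝ C)
    (L : Fin K → Θ →L[ℝ] G) (hL : ∃ k, L k ≠ 0) (y : Fin K → G)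
    (ω : Fin K → ℝ) (hω : ∀ k, ω k ∈ Set.Ioc (0 : ℝ) 1) (hωsum : ∑ k, ω k = 1)
    (R : G → G) (hR : ∀ z₁ z₂ : G, ‖R z₁ - R z₂‖ ^ 2 ≤ ⟪z₁ - z₂, R z₁ - R z₂⟫)
    (hsol : ∃ θ ∈ C, ∀ ϑ ∈ C,
      0 ≤ ⟪ϑ - θ, ∑ k, ω k • ContinuousLinearMap.adjoint (L k) (R (L k θ) - y k)⟫)
    (γ : ℝ) (hγ0 : 0 < γ)
    (hγ : γ < 2 / Finset.univ.sup' (Finset.univ_nonempty_iff.mpr ⟨⟨0, hK⟩⟩)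
      (fun k => ‖L k‖ ^ 2))
    -- P is the metric projection onto C
    (P : Θ → Θ) (hP : ∀ x : Θ, P x ∈ C ∧ ∀ c ∈ C, ‖x - P x‖ ≤ ‖x - c‖)
    -- blocks selected at each iteration
    (𝕂 : ℕ → Finset (Fin K))
    -- the iterates of Algorithm 1
    (θ : ℕ → Θ) (v : ℕ → Fin K → Θ)
    (hupd : ∀ n : ℕ, ∀ k ∈ 𝕂 n,
      v (n + 1) k = θ n - γ • ContinuousLinearMap.adjoint (L k) (R (L k (θ n)) - y k))
    (hkeep : ∀ n : ℕ, ∀ k ∉ 𝕂 n, v (n + 1) k = v n k)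
    (hproj : ∀ n : ℕ, θ (n + 1) = P (∑ k, ω k • v (n + 1) k))
    -- every index is selected at least once within any P consecutive iterations
    (hsweep : ∃ Q : ℕ, ∀ n : ℕ,
      (Finset.range Q).biUnion (fun p => 𝕂 (n + p)) = (Finset.univ : Finset (Fin K))) :
    ∃ θstar : Θ,
      (θstar ∈ C ∧ ∀ ϑ ∈ C,
        0 ≤ ⟪ϑ - θstar,
              ∑ k, ω k • ContinuousLinearMap.adjoint (L k) (R (L k θstar) - y k)⟫) ∧
      Tendsto θ atTop (nhds θstar) := by
  obtain ⟨Q, hQ⟩ := hsweep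
  have : Nonempty (Fin K) := ⟨⟨0, hK⟩⟩
  set β := Finset.univ.sup' (Finset.univ_nonempty_iff.mpr ⟨⟨0, hK⟩⟩) fun k => ‖L k‖ ^ 2
  have hLβ : ∀ k, ‖L k‖ ^ 2 ≤ β := fun k => Finset.le_sup' (fun k => ‖L k‖ ^ 2) (Finset.mem_univ k)
  have hβ : 0 < β := by
    obtain ⟨k, hk⟩ := hL
    exact (pow_pos (norm_pos_iff.2 hk) 2).trans_le (hLβ k)
  have hε : 0 < 2 / (γ * β) - 1 := by
    rw [sub_pos, one_lt_div (by positivity)]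
    rwa [lt_div_iff₀ hβ] at hγ
  -- shifted by one step, so that the projection step holds from the start
  have hit : IsBlockIteration (fun k => forwardStep (L k) R (y k) γ) P ω (fun n => 𝕂 (n + 1))
      (fun n => θ (n + 1)) (fun n => v (n + 1)) :=
    ⟨hproj, fun n => hupd (n + 1), fun n => hkeep (n + 1)⟩
  have hsweep : ∀ n k, ∃ j, n ≤ j ∧ j < n + Q ∧ k ∈ 𝕂 (j + 1) := fun n k => by
    obtain ⟨i, hi, hk⟩ := Finset.mem_biUnion.1 (hQ (n + 1) ▸ Finset.mem_univ k)
    exact ⟨n + i, by omega, by simp only [Finset.mem_range] at hi; omega, by rwa [add_right_comm]⟩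
  have hfix : ∀ ϑ, P (∑ k, ω k • forwardStep (L k) R (y k) γ ϑ) = ϑ ↔ ϑ ∈ C ∧ ∀ c ∈ C,
      0 ≤ ⟪c - ϑ, ∑ k, ω k • ContinuousLinearMap.adjoint (L k) (R (L k ϑ) - y k)⟫ := fun ϑ => by
    rw [← IsMetricProjection.eq_iff_variationalInequality hP hCcv hγ0]
    simp only [forwardStep, smul_sub, Finset.sum_sub_distrib, ← Finset.sum_smul, hωsum, one_smul,
      Finset.smul_sum, smul_comm γ]
  obtain ⟨q, hq, hlim⟩ := hit.tendsto_fixedPoint (IsMetricProjection.isFirmlyNonexpansive hP hCcv)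
    (fun k => isAveragedWith_forwardStep (L k) hR (y k) hγ0 hβ (hLβ k)) hε (fun k => (hω k).1)
    hωsum hsweep (hsol.imp fun ϑ h => (hfix ϑ).2 h)
  exact ⟨q, (hfix q).1 hq, (tendsto_add_atTop_iff_nat 1).1 hlim⟩

/-- convergence of the block-iterative forward-backward algorithm
(Algorithm 1) to a solution of the variational inequality (Proposition 1). -/
theorem block_iterative_forward_backward_converges
    {Θ G : Type*} [NormedAddCommGroup Θ] [InnerProductSpace ℝ Θ] [FiniteDimensional ℝ Θ]
    [NormedAddCommGroup G] [InnerProductSpace ℝ G] [FiniteDimensional ℝ G]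
    (K : ℕ) (hK : 0 < K)
    {C : Set Θ} (hCne : C.Nonempty) (hCcl : IsClosed C) (hCcv : Convex ℝ C)
    (L : Fin K → Θ →L[ℝ] G) (hL : ∃ k, L k ≠ 0) (y : Fin K → G)
    (ω : Fin K → ℝ) (hω : ∀ k, ω k ∈ Set.Ioc (0 : ℝ) 1) (hωsum : ∑ k, ω k = 1)
    (R : G → G) (hR : ∀ z₁ z₂ : G, ‖R z₁ - R z₂‖ ^ 2 ≤ ⟪z₁ - z₂, R z₁ - R z₂⟫)
    (hsol : ∃ θ ∈ C, ∀ ϑ ∈ C,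
      0 ≤ ⟪ϑ - θ, ∑ k, ω k • ContinuousLinearMap.adjoint (L k) (R (L k θ) - y k)⟫)
    (γ : ℝ) (hγ0 : 0 < γ)
    (hγ : γ < 2 / Finset.univ.sup' (Finset.univ_nonempty_iff.mpr ⟨⟨0, hK⟩⟩)
      (fun k => ‖L k‖ ^ 2))
    -- P is the metric projection onto C
    (P : Θ → Θ) (hP : ∀ x : Θ, P x ∈ C ∧ ∀ c ∈ C, ‖x - P x‖ ≤ ‖x - c‖)
    -- blocks selected at each iteration
    (𝕂 : ℕ → Finset (Fin K)) (h𝕂ne : ∀ n, (𝕂 n).Nonempty)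
    -- the iterates of Algorithm 1
    (θ : ℕ → Θ) (v : ℕ → Fin K → Θ)
    (hupd : ∀ n : ℕ, ∀ k ∈ 𝕂 n,
      v (n + 1) k = θ n - γ • ContinuousLinearMap.adjoint (L k) (R (L k (θ n)) - y k))
    (hkeep : ∀ n : ℕ, ∀ k ∉ 𝕂 n, v (n + 1) k = v n k)
    (hproj : ∀ n : ℕ, θ (n + 1) = P (∑ k, ω k • v (n + 1) k))
    -- every index is selected at least once within any P consecutive iterations
    (hsweep : ∃ Q : ℕ, ∀ n : ℕ,
      (Finset.range Q).biUnion (fun p => 𝕂 (n + p)) = (Finset.univ : Finset (Fin K))) :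
    ∃ θstar : Θ,
      (θstar ∈ C ∧ ∀ ϑ ∈ C,
        0 ≤ ⟪ϑ - θstar,
              ∑ k, ω k • ContinuousLinearMap.adjoint (L k) (R (L k θstar) - y k)⟫) ∧
      Tendsto θ atTop (nhds θstar) :=
  block_iterative_forward_backward_converges_general K hK hCcv L hL y ω hω hωsum R hR hsol γ hγ0 hγ
    P hP 𝕂 θ v hupd hkeep hproj hsweep
end

section
/- Let Θ and G be finite-dimensional real inner product spaces, let L : Θ → G be a nonzero continuous linear map, let y ∈ G, and let R : G → G be firmly nonexpansive. Then the operator F : Θ → Θ defined by F(θ) = L*(R(L θ) − y) is (1/‖L‖²)-cocoercive: for all θ_1, θ_2 ∈ Θ, ⟨θ_1 − θ_2, F θ_1 − F θ_2⟩ ≥ (1/‖L‖²) ‖F θ_1 − F θ_2‖². -/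
open scoped RealInnerProductSpace

open ContinuousLinearMap

theorem ContinuousLinearMap.one_div_norm_sq_mul_norm_adjoint_apply_sq_le
    {E F : Type*} [NormedAddCommGroup E] [InnerProductSpace ℝ E] [CompleteSpace E]
    [NormedAddCommGroup F] [InnerProductSpace ℝ F] [CompleteSpace F]
    (L : E →L[ℝ] F) (w : F) : 1 / ‖L‖ ^ 2 * ‖adjoint L w‖ ^ 2 ≤ ‖w‖ ^ 2 := by
  rcases (norm_nonneg L).eq_or_lt with hL | hL
  · simp [← hL]
  have hbound : ‖adjoint L w‖ ≤ ‖L‖ * ‖w‖ := by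
    simpa only [LinearIsometryEquiv.norm_map] using (adjoint L).le_opNorm w
  rw [one_div_mul_eq_div, div_le_iff₀ (by positivity), ← mul_pow, mul_comm ‖w‖]
  gcongr

theorem cocoercive_adjoint_comp_general
    {Θ G : Type*} [NormedAddCommGroup Θ] [InnerProductSpace ℝ Θ] [FiniteDimensional ℝ Θ]
    [NormedAddCommGroup G] [InnerProductSpace ℝ G] [FiniteDimensional ℝ G]
    (L : Θ →L[ℝ] G) (y : G)
    (R : G → G) (hR : ∀ z₁ z₂ : G, ‖R z₁ - R z₂‖ ^ 2 ≤ ⟪z₁ - z₂, R z₁ - R z₂⟫)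
    (F : Θ → Θ) (hF : ∀ θ : Θ, F θ = ContinuousLinearMap.adjoint L (R (L θ) - y)) :
    ∀ θ₁ θ₂ : Θ, (1 / ‖L‖ ^ 2) * ‖F θ₁ - F θ₂‖ ^ 2 ≤ ⟪θ₁ - θ₂, F θ₁ - F θ₂⟫ := by
  intro θ₁ θ₂
  have hdiff : F θ₁ - F θ₂ = adjoint L (R (L θ₁) - R (L θ₂)) := by
    rw [hF, hF, ← map_sub, sub_sub_sub_cancel_right]
  calc 1 / ‖L‖ ^ 2 * ‖F θ₁ - F θ₂‖ ^ 2 ≤ ‖R (L θ₁) - R (L θ₂)‖ ^ 2 :=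
        hdiff ▸ L.one_div_norm_sq_mul_norm_adjoint_apply_sq_le _
    _ ≤ ⟪L θ₁ - L θ₂, R (L θ₁) - R (L θ₂)⟫ := hR _ _
    _ = ⟪θ₁ - θ₂, F θ₁ - F θ₂⟫ := by rw [hdiff, adjoint_inner_right, map_sub]

/-- F(θ) = L*(R(Lθ) − y) is (1/‖L‖²)-cocoercive whenever R is firmly
nonexpansive and L ≠ 0. -/
theorem cocoercive_adjoint_comp
    {Θ G : Type*} [NormedAddCommGroup Θ] [InnerProductSpace ℝ Θ] [FiniteDimensional ℝ Θ]
    [NormedAddCommGroup G] [InnerProductSpace ℝ G] [FiniteDimensional ℝ G]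
    (L : Θ →L[ℝ] G) (hL : L ≠ 0) (y : G)
    (R : G → G) (hR : ∀ z₁ z₂ : G, ‖R z₁ - R z₂‖ ^ 2 ≤ ⟪z₁ - z₂, R z₁ - R z₂⟫)
    (F : Θ → Θ) (hF : ∀ θ : Θ, F θ = ContinuousLinearMap.adjoint L (R (L θ) - y)) :
    ∀ θ₁ θ₂ : Θ, (1 / ‖L‖ ^ 2) * ‖F θ₁ - F θ₂‖ ^ 2 ≤ ⟪θ₁ - θ₂, F θ₁ - F θ₂⟫ :=
  cocoercive_adjoint_comp_general L y R hR F hF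
end

section
/- Let Θ be a finite-dimensional real inner product space, let C ⊆ Θ be a nonempty closed convex set, let β > 0, let F : Θ → Θ be β-cocoercive, and let γ ∈ (0, 2β). Suppose the variational inequality — find θ ∈ C such that ⟨ϑ − θ, F θ⟩ ≥ 0 for all ϑ ∈ C — has at least one solution. Given θ_0 ∈ Θ, define θ_{n+1} = P_C(θ_n − γ F θ_n) for all n ∈ ℕ. Then the sequence (θ_n)_{n∈ℕ} converges to a solution of the variational inequality. -/
/-!
The solutions of the variational inequality are exactly the fixed points of
`T x = P (x - γ • F x)`. Firm nonexpansiveness of `P` and cocoercivity of `F` give, for each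
such fixed point `z`,
`‖T x - z‖² + ‖(x - γ • F x - T x) - (z - γ • F z - z)‖² + γ (2β - γ) ‖F x - F z‖² ≤ ‖x - z‖²`.
So the iterates are Fejér monotone with respect to the solution set and, both error terms being
summable, successive iterates get arbitrarily close. In finite dimension the bounded iterates have
a cluster point, which by continuity of `T` is a fixed point; Fejér monotonicity with respect to
it forces convergence of the whole sequence.
-/

open scoped RealInnerProductSpace
open Filter Topology Function

section Fejer

theorem tendsto_zero_of_succ_add_le {a r : ℕ → ℝ} (ha : ∀ n, 0 ≤ a n) (hr : ∀ n, 0 ≤ r n)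
    (h : ∀ n, a (n + 1) + r n ≤ a n) : Tendsto r atTop (𝓝 0) := by
  have hsum : ∀ n, ∑ i ∈ Finset.range n, r i ≤ a 0 - a n := by
    intro n
    induction n with
    | zero => simp
    | succ n ih => rw [Finset.sum_range_succ]; linarith [h n]
  refine (summable_of_sum_range_le hr (c := a 0) fun n => ?_).tendsto_atTop_zero
  linarith [hsum n, ha n]

theorem tendsto_zero_of_sq_le {ι : Type*} {l : Filter ι} {f r : ι → ℝ}
    (hr : Tendsto r l (𝓝 0)) (h : ∀ i, f i ^ 2 ≤ r i) : Tendsto f l (𝓝 0) := by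
  refine squeeze_zero_norm (a := fun i => √(r i)) (fun i => ?_) (by simpa using hr.sqrt)
  rw [Real.norm_eq_abs, ← Real.sqrt_sq_eq_abs]
  exact Real.sqrt_le_sqrt (h i)

variable {X : Type*}

theorem tendsto_of_mapClusterPt_of_antitone_dist [PseudoMetricSpace X] {x : ℕ → X} {t : X}
    (ht : MapClusterPt t atTop x) (hx : Antitone fun n => dist (x n) t) :
    Tendsto x atTop (𝓝 t) := by
  refine Metric.tendsto_atTop.2 fun ε hε => ?_
  obtain ⟨N, hN⟩ := (ht.frequently (Metric.ball_mem_nhds t hε)).exists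
  exact ⟨N, fun n hn => (hx hn).trans_lt hN⟩

theorem exists_tendsto_of_antitone_dist [PseudoMetricSpace X] [ProperSpace X] {S : Set X}
    {x : ℕ → X} (hS : S.Nonempty) (hx : ∀ z ∈ S, Antitone fun n => dist (x n) z)
    (hclust : ∀ t, MapClusterPt t atTop x → t ∈ S) : ∃ t ∈ S, Tendsto x atTop (𝓝 t) := by
  obtain ⟨z, hz⟩ := hS
  have hbdd : map x atTop ≤ 𝓟 (Metric.closedBall z (dist (x 0) z)) :=
    tendsto_principal.2 <| .of_forall fun n => hx z hz (Nat.zero_le n)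
  obtain ⟨t, -, ht⟩ := (isCompact_closedBall z _).exists_mapClusterPt hbdd
  exact ⟨t, hclust t ht, tendsto_of_mapClusterPt_of_antitone_dist ht (hx t (hclust t ht))⟩

theorem isFixedPt_of_mapClusterPt [MetricSpace X] {T : X → X} {x : ℕ → X} {t : X}
    (hT : Continuous T) (hx : ∀ n, x (n + 1) = T (x n))
    (hreg : Tendsto (fun n => dist (x n) (x (n + 1))) atTop (𝓝 0))
    (ht : MapClusterPt t atTop x) : IsFixedPt T t := by
  obtain ⟨φ, hφ, hlim⟩ := ht.tendsto_subseq
  have hT_lim : Tendsto (fun k => x (φ k + 1)) atTop (𝓝 (T t)) := by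
    simp only [hx]
    exact (hT.tendsto t).comp hlim
  exact tendsto_nhds_unique hT_lim (hlim.congr_dist (hreg.comp hφ.tendsto_atTop))

end Fejer

section ProjectedGradient

variable {Θ : Type*} [NormedAddCommGroup Θ] [InnerProductSpace ℝ Θ]

def IsMetricProj (C : Set Θ) (P : Θ → Θ) : Prop :=
  ∀ x, P x ∈ C ∧ ∀ c ∈ C, ‖x - P x‖ ≤ ‖x - c‖

def Cocoercive (β : ℝ) (F : Θ → Θ) : Prop :=
  ∀ x y, β * ‖F x - F y‖ ^ 2 ≤ ⟪x - y, F x - F y⟫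

def SolvesVI (C : Set Θ) (F : Θ → Θ) (θ : Θ) : Prop :=
  θ ∈ C ∧ ∀ ϑ ∈ C, 0 ≤ ⟪ϑ - θ, F θ⟫

def projGradStep (P F : Θ → Θ) (γ : ℝ) (x : Θ) : Θ :=
  P (x - γ • F x)

variable {C : Set Θ} {P F : Θ → Θ} {β γ : ℝ}

namespace IsMetricProj

theorem inner_sub_le_zero (hC : Convex ℝ C) (hP : IsMetricProj C P) (x : Θ) {c : Θ}
    (hc : c ∈ C) : ⟪x - P x, c - P x⟫ ≤ 0 := by
  have hmin : ‖x - P x‖ = ⨅ w : C, ‖x - w‖ := by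
    have : Nonempty C := ⟨⟨P x, (hP x).1⟩⟩
    have hbdd : BddBelow (Set.range fun w : C => ‖x - w‖) :=
      ⟨0, by rintro _ ⟨w, rfl⟩; positivity⟩
    exact le_antisymm (le_ciInf fun w => (hP x).2 w w.2) (ciInf_le hbdd ⟨P x, (hP x).1⟩)
  exact (norm_eq_iInf_iff_real_inner_le_zero hC (hP x).1).1 hmin c hc

theorem eq_iff (hC : Convex ℝ C) (hP : IsMetricProj C P) {x p : Θ} :
    P x = p ↔ p ∈ C ∧ ∀ c ∈ C, ⟪x - p, c - p⟫ ≤ 0 := by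
  refine ⟨?_, fun ⟨hpC, hp⟩ => ?_⟩
  · rintro rfl
    exact ⟨(hP x).1, fun c hc => hP.inner_sub_le_zero hC x hc⟩
  -- The two obtuse-angle conditions at `P x` and at `p` add up to `‖P x - p‖² ≤ 0`.
  have h₁ := hP.inner_sub_le_zero hC x hpC
  have h₂ := hp (P x) (hP x).1
  have hsq : ‖P x - p‖ ^ 2 = ⟪x - p, P x - p⟫ - ⟪x - P x, P x - p⟫ := by
    rw [← inner_sub_left, sub_sub_sub_cancel_left, real_inner_self_eq_norm_sq]
  have hflip : ⟪x - P x, P x - p⟫ = -⟪x - P x, p - P x⟫ := by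
    rw [← inner_neg_right, neg_sub]
  have hle : ‖P x - p‖ ^ 2 ≤ 0 := by linarith
  exact sub_eq_zero.1 <| norm_eq_zero.1 <|
    (pow_eq_zero_iff two_ne_zero).1 (le_antisymm hle (sq_nonneg _))

theorem norm_sub_sq_add_norm_sub_sq_le (hC : Convex ℝ C) (hP : IsMetricProj C P) (x y : Θ) :
    ‖P x - P y‖ ^ 2 + ‖(x - P x) - (y - P y)‖ ^ 2 ≤ ‖x - y‖ ^ 2 := by
  have h₁ : 0 ≤ ⟪x - P x, P x - P y⟫ := by
    have := hP.inner_sub_le_zero hC x (hP y).1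
    rw [← neg_sub (P x) (P y), inner_neg_right] at this
    linarith
  have h₂ := hP.inner_sub_le_zero hC y (hP x).1
  have hsplit : x - y = (P x - P y) + ((x - P x) - (y - P y)) := by abel
  rw [hsplit, norm_add_sq_real, real_inner_comm, inner_sub_left]
  nlinarith [sq_nonneg ‖(x - P x) - (y - P y)‖]

theorem lipschitzWith_one (hC : Convex ℝ C) (hP : IsMetricProj C P) : LipschitzWith 1 P := by
  refine LipschitzWith.of_dist_le_mul fun x y => ?_
  rw [NNReal.coe_one, one_mul, dist_eq_norm, dist_eq_norm]
  refine le_of_sq_le_sq ?_ (norm_nonneg _)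
  nlinarith [hP.norm_sub_sq_add_norm_sub_sq_le hC x y, sq_nonneg ‖(x - P x) - (y - P y)‖]

end IsMetricProj

namespace Cocoercive

theorem lipschitzWith (hF : Cocoercive β F) (hβ : 0 < β) :
    LipschitzWith (Real.toNNReal β⁻¹) F := by
  refine LipschitzWith.of_dist_le_mul fun x y => ?_
  rw [Real.coe_toNNReal _ (inv_nonneg.2 hβ.le), dist_eq_norm, dist_eq_norm, inv_mul_eq_div,
    le_div_iff₀ hβ]
  rcases (norm_nonneg (F x - F y)).eq_or_lt with h | h
  · rw [← h, zero_mul]; exact norm_nonneg _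
  · nlinarith [hF x y, real_inner_le_norm (x - y) (F x - F y)]

theorem norm_sub_smul_sq_add_le (hF : Cocoercive β F) (hγ : 0 ≤ γ) (x y : Θ) :
    ‖(x - γ • F x) - (y - γ • F y)‖ ^ 2 + γ * (2 * β - γ) * ‖F x - F y‖ ^ 2 ≤ ‖x - y‖ ^ 2 := by
  have hsplit : (x - γ • F x) - (y - γ • F y) = (x - y) - γ • (F x - F y) := by
    rw [smul_sub]; abel
  rw [hsplit, norm_sub_sq_real, real_inner_smul_right, norm_smul, Real.norm_eq_abs, mul_pow,
    sq_abs]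
  nlinarith [hF x y]

end Cocoercive

theorem continuous_projGradStep (hC : Convex ℝ C) (hP : IsMetricProj C P) (hF : Cocoercive β F)
    (hβ : 0 < β) : Continuous (projGradStep P F γ) :=
  (hP.lipschitzWith_one hC).continuous.comp
    (continuous_id.sub ((hF.lipschitzWith hβ).continuous.const_smul γ))

theorem isFixedPt_projGradStep_iff (hC : Convex ℝ C) (hP : IsMetricProj C P) (hγ : 0 < γ)
    {z : Θ} : IsFixedPt (projGradStep P F γ) z ↔ SolvesVI C F z := by
  have hinner : ∀ c, ⟪z - γ • F z - z, c - z⟫ = -(γ * ⟪c - z, F z⟫) := fun c => by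
    rw [sub_sub_cancel_left, inner_neg_left, real_inner_smul_left, real_inner_comm]
  simp only [IsFixedPt, projGradStep, hP.eq_iff hC, SolvesVI, hinner, neg_nonpos,
    mul_nonneg_iff_of_pos_left hγ]

theorem norm_projGradStep_sub_sq_add_le (hC : Convex ℝ C) (hP : IsMetricProj C P)
    (hF : Cocoercive β F) (hγ : 0 ≤ γ) {z : Θ} (hz : IsFixedPt (projGradStep P F γ) z) (x : Θ) :
    ‖projGradStep P F γ x - z‖ ^ 2 + ‖(x - γ • F x - projGradStep P F γ x) - (z - γ • F z - z)‖ ^ 2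
      + γ * (2 * β - γ) * ‖F x - F z‖ ^ 2 ≤ ‖x - z‖ ^ 2 := by
  have hP_firm := hP.norm_sub_sq_add_norm_sub_sq_le hC (x - γ • F x) (z - γ • F z)
  have hF_step := hF.norm_sub_smul_sq_add_le hγ x z
  rw [show P (z - γ • F z) = z from hz] at hP_firm
  unfold projGradStep
  linarith

variable {θ : ℕ → Θ}

theorem antitone_dist_of_projGradStep (hC : Convex ℝ C) (hP : IsMetricProj C P)
    (hF : Cocoercive β F) (hγ : γ ∈ Set.Ioo 0 (2 * β))
    (hrec : ∀ n, θ (n + 1) = projGradStep P F γ (θ n)) {z : Θ}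
    (hz : IsFixedPt (projGradStep P F γ) z) : Antitone fun n => dist (θ n) z := by
  refine antitone_nat_of_succ_le fun n => ?_
  have hfejer := norm_projGradStep_sub_sq_add_le hC hP hF hγ.1.le hz (θ n)
  have hc : 0 ≤ γ * (2 * β - γ) := mul_nonneg hγ.1.le (by linarith [hγ.2])
  rw [← hrec] at hfejer
  rw [dist_eq_norm, dist_eq_norm]
  refine le_of_sq_le_sq ?_ (norm_nonneg _)
  nlinarith [sq_nonneg ‖(θ n - γ • F (θ n) - θ (n + 1)) - (z - γ • F z - z)‖,
    sq_nonneg ‖F (θ n) - F z‖]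

theorem tendsto_dist_succ_of_projGradStep (hC : Convex ℝ C) (hP : IsMetricProj C P)
    (hF : Cocoercive β F) (hγ : γ ∈ Set.Ioo 0 (2 * β))
    (hrec : ∀ n, θ (n + 1) = projGradStep P F γ (θ n)) {z : Θ}
    (hz : IsFixedPt (projGradStep P F γ) z) :
    Tendsto (fun n => dist (θ n) (θ (n + 1))) atTop (𝓝 0) := by
  set c := γ * (2 * β - γ)
  have hc : 0 < c := mul_pos hγ.1 (by linarith [hγ.2])
  set w := fun n => (θ n - γ • F (θ n) - θ (n + 1)) - (z - γ • F z - z)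
  set d := fun n => F (θ n) - F z
  have hfejer : ∀ n, ‖θ (n + 1) - z‖ ^ 2 + (‖w n‖ ^ 2 + c * ‖d n‖ ^ 2) ≤ ‖θ n - z‖ ^ 2 := by
    intro n
    have := norm_projGradStep_sub_sq_add_le hC hP hF hγ.1.le hz (θ n)
    rw [← hrec] at this
    linarith
  have hr := tendsto_zero_of_succ_add_le (a := fun n => ‖θ n - z‖ ^ 2)
    (r := fun n => ‖w n‖ ^ 2 + c * ‖d n‖ ^ 2) (fun n => sq_nonneg _) (fun n => by positivity) hfejer
  have hw : Tendsto (fun n => ‖w n‖) atTop (𝓝 0) :=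
    tendsto_zero_of_sq_le hr fun n => le_add_of_nonneg_right (by positivity)
  have hd : Tendsto (fun n => ‖d n‖) atTop (𝓝 0) :=
    tendsto_zero_of_sq_le (by simpa using hr.div_const c) fun n => by
      rw [le_div_iff₀ hc]
      nlinarith [sq_nonneg ‖w n‖]
  refine squeeze_zero (fun n => dist_nonneg) (fun n => ?_) (by simpa using hw.add (hd.const_mul γ))
  calc dist (θ n) (θ (n + 1)) = ‖w n + γ • d n‖ := by
        rw [dist_eq_norm]
        congr 1
        simp only [w, d, smul_sub]
        abel
    _ ≤ ‖w n‖ + γ * ‖d n‖ := by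
        grw [norm_add_le, norm_smul, Real.norm_of_nonneg hγ.1.le]

end ProjectedGradient

theorem proj_gradient_converges_general
    {Θ : Type*} [NormedAddCommGroup Θ] [InnerProductSpace ℝ Θ] [FiniteDimensional ℝ Θ]
    {C : Set Θ} (hCcv : Convex ℝ C)
    (β : ℝ) (hβ : 0 < β)
    (F : Θ → Θ) (hF : ∀ x y : Θ, β * ‖F x - F y‖ ^ 2 ≤ ⟪x - y, F x - F y⟫)
    (γ : ℝ) (hγ : γ ∈ Set.Ioo 0 (2 * β))
    (hsol : ∃ θ ∈ C, ∀ ϑ ∈ C, 0 ≤ ⟪ϑ - θ, F θ⟫)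
    (P : Θ → Θ) (hP : ∀ x : Θ, P x ∈ C ∧ ∀ c ∈ C, ‖x - P x‖ ≤ ‖x - c‖)
    (θ : ℕ → Θ) (hrec : ∀ n : ℕ, θ (n + 1) = P (θ n - γ • F (θ n))) :
    ∃ θstar : Θ, (θstar ∈ C ∧ ∀ ϑ ∈ C, 0 ≤ ⟪ϑ - θstar, F θstar⟫) ∧
      Tendsto θ atTop (nhds θstar) := by
  have hfix : ∀ t, IsFixedPt (projGradStep P F γ) t ↔ SolvesVI C F t := fun t =>
    isFixedPt_projGradStep_iff hCcv hP hγ.1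
  obtain ⟨z, hz⟩ := hsol
  obtain ⟨t, ht, hlim⟩ := exists_tendsto_of_antitone_dist (S := fixedPoints (projGradStep P F γ))
    ⟨z, (hfix z).2 hz⟩ (fun _ hz => antitone_dist_of_projGradStep hCcv hP hF hγ hrec hz)
    fun _ hclust => isFixedPt_of_mapClusterPt (continuous_projGradStep hCcv hP hF hβ) hrec
      (tendsto_dist_succ_of_projGradStep hCcv hP hF hγ hrec ((hfix z).2 hz)) hclust
  exact ⟨t, (hfix t).1 ht, hlim⟩

/-- the projected forward iteration θ_{n+1} = P_C(θ_n − γFθ_n) with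
β-cocoercive F and γ ∈ (0, 2β) converges to a solution of the variational inequality,
provided one exists. -/
theorem proj_gradient_converges
    {Θ : Type*} [NormedAddCommGroup Θ] [InnerProductSpace ℝ Θ] [FiniteDimensional ℝ Θ]
    {C : Set Θ} (hCne : C.Nonempty) (hCcl : IsClosed C) (hCcv : Convex ℝ C)
    (β : ℝ) (hβ : 0 < β)
    (F : Θ → Θ) (hF : ∀ x y : Θ, β * ‖F x - F y‖ ^ 2 ≤ ⟪x - y, F x - F y⟫)
    (γ : ℝ) (hγ : γ ∈ Set.Ioo 0 (2 * β))
    (hsol : ∃ θ ∈ C, ∀ ϑ ∈ C, 0 ≤ ⟪ϑ - θ, F θ⟫)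
    (P : Θ → Θ) (hP : ∀ x : Θ, P x ∈ C ∧ ∀ c ∈ C, ‖x - P x‖ ≤ ‖x - c‖)
    (θ : ℕ → Θ) (hrec : ∀ n : ℕ, θ (n + 1) = P (θ n - γ • F (θ n))) :
    ∃ θstar : Θ, (θstar ∈ C ∧ ∀ ϑ ∈ C, 0 ≤ ⟪ϑ - θstar, F θstar⟫) ∧
      Tendsto θ atTop (nhds θstar) :=
  proj_gradient_converges_general hCcv β hβ F hF γ hγ hsol P hP θ hrec
end
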